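/- The Laplace density is a scale mixture of Gaussians with exponential mixing: for β ∈ ℝ and γ > 0, ∫_0^∞ (1/√(2πω))·exp{-β²/(2ω)} · (γ²/2)·exp{-γ²ω/2} dω = (γ/2)·exp{-γ|β|}. -/

import Mathlib

/-!
Substituting `ω = u ^ 2` turns the integral into `γ² / √(2π) · ∫₀^∞ exp (-(a u² + c / u²)) du`
with `a = γ² / 2`, `c = β² / 2`. Completing the square, `a u² + c / u² = a (u - d / u)² + 2 √(a c)`
with `d = √(c / a)`, and the Cauchy–Schlömilch substitution `v = u - d / u` computes the rest:
it maps `(0, ∞)` onto `ℝ` with `dv = (1 + d / u²) du`, while the involution `u ↦ d / u` shows that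
both parts of this Jacobian contribute equally when the integrand is even. What remains is the
Gaussian integral `∫ exp (-a v²) dv = √(π / a)`.
-/

open MeasureTheory Real Set

section CauchySchlomilch

variable {E : Type*} [NormedAddCommGroup E] [NormedSpace ℝ E] {d : ℝ}

theorem hasDerivAt_sub_const_div {u : ℝ} (hu : u ≠ 0) :
    HasDerivAt (fun u => u - d / u) (1 + d / u ^ 2) u := by
  simpa [div_eq_mul_inv] using (hasDerivAt_id' u).fun_sub ((hasDerivAt_inv hu).const_mul d)

theorem hasDerivAt_const_div {u : ℝ} (hu : u ≠ 0) :
    HasDerivAt (fun u => d / u) (-(d / u ^ 2)) u := by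
  simpa [div_eq_mul_inv] using (hasDerivAt_inv hu).const_mul d

theorem strictMonoOn_sub_const_div (hd : 0 ≤ d) : StrictMonoOn (fun u => u - d / u) (Ioi 0) :=
  fun _ hu _ _ huv => by
    simp only
    linarith [div_le_div_of_nonneg_left hd hu huv.le]

theorem injOn_const_div (hd : d ≠ 0) : InjOn (fun u => d / u) (Ioi 0) :=
  fun _ _ _ _ h => by simpa [div_eq_mul_inv, hd] using h

theorem image_sub_const_div_Ioi_zero (hd : 0 < d) : (fun u => u - d / u) '' Ioi 0 = univ := by
  refine eq_univ_of_forall fun v => ?_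
  -- the positive root of `u ^ 2 - v * u - d = 0`
  set s := √(v ^ 2 + 4 * d)
  have hs : s ^ 2 = v ^ 2 + 4 * d := sq_sqrt (by positivity)
  have hvs : |v| < s := by
    rw [← sqrt_sq_eq_abs]; exact sqrt_lt_sqrt (sq_nonneg v) (by linarith)
  have hu : 0 < (v + s) / 2 := by linarith [neg_abs_le v]
  refine ⟨(v + s) / 2, hu, ?_⟩
  have hroot : d / ((v + s) / 2) = (v + s) / 2 - v := by
    rw [div_eq_iff hu.ne']
    linear_combination -hs / 4
  simp only [hroot]
  ring

theorem image_const_div_Ioi_zero (hd : 0 < d) : (fun u => d / u) '' Ioi 0 = Ioi 0 :=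
  Subset.antisymm (image_subset_iff.2 fun _ hu => div_pos hd hu)
    fun u hu => ⟨d / u, div_pos hd hu, div_div_cancel₀ hd.ne'⟩

theorem integral_Ioi_smul_comp_sub_const_div (hd : 0 < d) (F : ℝ → E) :
    ∫ u in Ioi 0, (1 + d / u ^ 2) • F (u - d / u) = ∫ x, F x := by
  have := integral_image_eq_integral_abs_deriv_smul measurableSet_Ioi
    (fun u hu => (hasDerivAt_sub_const_div (ne_of_gt hu)).hasDerivWithinAt)
    (strictMonoOn_sub_const_div hd.le).injOn F
  rw [image_sub_const_div_Ioi_zero hd, Measure.restrict_univ] at this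
  rw [this]
  refine setIntegral_congr_fun measurableSet_Ioi fun u _ => ?_
  rw [abs_of_pos (by positivity)]

theorem integrableOn_Ioi_smul_comp_sub_const_div_iff (hd : 0 < d) (F : ℝ → E) :
    IntegrableOn (fun u => (1 + d / u ^ 2) • F (u - d / u)) (Ioi 0) ↔ Integrable F := by
  have := integrableOn_image_iff_integrableOn_abs_deriv_smul measurableSet_Ioi
    (fun u hu => (hasDerivAt_sub_const_div (ne_of_gt hu)).hasDerivWithinAt)
    (strictMonoOn_sub_const_div hd.le).injOn F
  rw [image_sub_const_div_Ioi_zero hd, integrableOn_univ] at this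
  rw [this]
  refine integrableOn_congr_fun (fun u _ => ?_) measurableSet_Ioi
  rw [abs_of_pos (by positivity)]

theorem integral_Ioi_smul_comp_const_div (hd : 0 < d) (G : ℝ → E) :
    ∫ u in Ioi 0, (d / u ^ 2) • G (d / u) = ∫ u in Ioi 0, G u := by
  have := integral_image_eq_integral_abs_deriv_smul measurableSet_Ioi
    (fun u hu => (hasDerivAt_const_div (d := d) (ne_of_gt hu)).hasDerivWithinAt)
    (injOn_const_div hd.ne') G
  rw [image_const_div_Ioi_zero hd] at this
  rw [this]
  exact setIntegral_congr_fun measurableSet_Ioi fun u hu => by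
    rw [abs_neg, abs_of_pos (div_pos hd (pow_pos hu 2))]

theorem integrableOn_Ioi_smul_comp_const_div_iff (hd : 0 < d) (G : ℝ → E) :
    IntegrableOn (fun u => (d / u ^ 2) • G (d / u)) (Ioi 0) ↔ IntegrableOn G (Ioi 0) := by
  have := integrableOn_image_iff_integrableOn_abs_deriv_smul measurableSet_Ioi
    (fun u hu => (hasDerivAt_const_div (d := d) (ne_of_gt hu)).hasDerivWithinAt)
    (injOn_const_div hd.ne') G
  rw [image_const_div_Ioi_zero hd] at this
  rw [this]
  exact integrableOn_congr_fun (fun u hu => by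
    rw [abs_neg, abs_of_pos (div_pos hd (pow_pos hu 2))]) measurableSet_Ioi

theorem integral_Ioi_comp_sub_const_div_of_even (hd : 0 < d) {F : ℝ → E}
    (hF : ∀ x, F (-x) = F x) : ∫ u in Ioi 0, F (u - d / u) = (2 : ℝ)⁻¹ • ∫ x, F x := by
  set H : ℝ → E := fun u => F (u - d / u)
  -- `u ↦ d / u` is an involution of `Ioi 0` that reverses the sign of `u - d / u`
  have hflip : EqOn (fun u => (d / u ^ 2) • H (d / u)) (fun u => (d / u ^ 2) • H u) (Ioi 0) := by
    intro u hu
    simp only [H, div_div_cancel₀ hd.ne', ← hF (u - d / u), neg_sub]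
  have hsplit : (fun u => (1 + d / u ^ 2) • H u) = fun u => H u + (d / u ^ 2) • H u := by
    simp only [add_smul, one_smul]
  by_cases hH : IntegrableOn H (Ioi 0)
  · have hH' : IntegrableOn (fun u => (d / u ^ 2) • H u) (Ioi 0) :=
      ((integrableOn_Ioi_smul_comp_const_div_iff hd H).2 hH).congr_fun hflip measurableSet_Ioi
    rw [← integral_Ioi_smul_comp_sub_const_div hd, hsplit, integral_add hH hH',
      ← setIntegral_congr_fun measurableSet_Ioi hflip, integral_Ioi_smul_comp_const_div hd]
    module
  · -- `H` is `(1 + d / u ^ 2) • H` scaled by a factor in `(0, 1]`, so it is integrable if `F` is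
    have hF : ¬ Integrable F := fun hF => hH <| by
      have hbound : ∀ u : ℝ, ‖(1 + d / u ^ 2)⁻¹‖ ≤ 1 := fun u => by
        rw [norm_inv, norm_of_nonneg (by positivity)]
        exact inv_le_one_of_one_le₀ (le_add_of_nonneg_right (by positivity))
      have hscaled := (integrableOn_Ioi_smul_comp_sub_const_div_iff hd F).2 hF
      exact IntegrableOn.congr_fun (hscaled.bdd_smul 1 (φ := fun u => (1 + d / u ^ 2)⁻¹)
          (Measurable.aestronglyMeasurable (by fun_prop)) (ae_of_all _ hbound))
        (fun u _ => inv_smul_smul₀ (by positivity) (H u)) measurableSet_Ioi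
    rw [integral_undef hH, integral_undef hF, smul_zero]

end CauchySchlomilch

theorem integral_Ioi_exp_neg_mul_sq_add_div_sq {a c : ℝ} (ha : 0 < a) (hc : 0 ≤ c) :
    ∫ u in Ioi 0, exp (-(a * u ^ 2 + c / u ^ 2)) = √(π / a) / 2 * exp (-2 * √(a * c)) := by
  rcases hc.eq_or_lt with rfl | hc
  · simpa using integral_gaussian_Ioi a
  set d := √(c / a)
  have hd : 0 < d := sqrt_pos.2 (div_pos hc ha)
  have hd_sq : a * d ^ 2 = c := by rw [sq_sqrt (div_pos hc ha).le]; field_simp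
  have had : a * d = √(a * c) := by
    rw [← sqrt_sq (by positivity : 0 ≤ a * d), ← hd_sq]; ring_nf
  have hsquare : ∀ u ∈ Ioi (0 : ℝ),
      exp (-(a * u ^ 2 + c / u ^ 2)) = exp (-2 * √(a * c)) * exp (-a * (u - d / u) ^ 2) := by
    intro u hu
    have hu : u ≠ 0 := ne_of_gt hu
    rw [← exp_add, ← had, ← hd_sq]
    congr 1
    field_simp
    ring
  rw [setIntegral_congr_fun measurableSet_Ioi hsquare, integral_const_mul,
    integral_Ioi_comp_sub_const_div_of_even hd (F := fun x => exp (-a * x ^ 2)) (by simp),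
    integral_gaussian, smul_eq_mul]
  ring

theorem laplace_scale_mixture (β γ : ℝ) (hγ : 0 < γ) :
    ∫ ω in Ioi (0:ℝ),
        (1 / Real.sqrt (2*π*ω)) * Real.exp (-β^2 / (2*ω)) *
          ((γ^2/2) * Real.exp (-γ^2 * ω / 2))
      = (γ/2) * Real.exp (-γ * |β|) := by
  rw [← integral_comp_rpow_Ioi_of_pos two_pos]
  have hsubst : ∀ u ∈ Ioi (0 : ℝ),
      ((2 : ℝ) * u ^ ((2 : ℝ) - 1)) • ((1 / √(2 * π * u ^ (2 : ℝ))) *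
        exp (-β ^ 2 / (2 * u ^ (2 : ℝ))) * ((γ ^ 2 / 2) * exp (-γ ^ 2 * u ^ (2 : ℝ) / 2)))
      = γ ^ 2 / √(2 * π) * exp (-(γ ^ 2 / 2 * u ^ 2 + β ^ 2 / 2 / u ^ 2)) := by
    intro u hu
    have hu : 0 < u := hu
    have hexp : exp (-β ^ 2 / (2 * u ^ 2)) * exp (-γ ^ 2 * u ^ 2 / 2)
        = exp (-(γ ^ 2 / 2 * u ^ 2 + β ^ 2 / 2 / u ^ 2)) := by
      rw [← exp_add]; congr 1; ring
    rw [show (2 : ℝ) - 1 = 1 by norm_num, rpow_one, rpow_two, sqrt_mul (by positivity),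
      sqrt_sq hu.le, smul_eq_mul, ← hexp]
    field_simp
  rw [setIntegral_congr_fun measurableSet_Ioi hsubst, integral_const_mul,
    integral_Ioi_exp_neg_mul_sq_add_div_sq (by positivity) (by positivity)]
  have hsqrt_pi : √(π / (γ ^ 2 / 2)) = √(2 * π) / γ := by
    rw [show π / (γ ^ 2 / 2) = 2 * π / γ ^ 2 by ring, sqrt_div' _ (sq_nonneg γ), sqrt_sq hγ.le]
  have hsqrt_exp : √(γ ^ 2 / 2 * (β ^ 2 / 2)) = γ * |β| / 2 := by
    rw [show γ ^ 2 / 2 * (β ^ 2 / 2) = (γ * |β| / 2) ^ 2 by rw [div_pow, mul_pow, sq_abs]; ring,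
      sqrt_sq (by positivity)]
  rw [hsqrt_pi, hsqrt_exp]
  field_simp
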